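/- Let 𝒜 be an abelian category, V a quasi-tilting object and 𝒯 := Gen(V) the associated torsion class. Then: (1) ℬ := Sub(𝒯) is an abelian exact subcategory of 𝒜 (it is closed under finite coproducts, kernels and cokernels, so is abelian with exact inclusion) and V is a tilting object of ℬ; (2) Add(V) = ^{⊥1}𝒯 ∩ 𝒯; (3) if V' is another quasi-tilting object of 𝒜, then Gen(V) = Gen(V') if and only if Add(V) = Add(V'). -/

import Mathlib

/-!
Common definitions for formalizing results of "Tilting preenvelopes and cotilting
precovers in general Abelian categories" (Parra–Saorín–Virili).

Conventions:
* Full subcategories of an abelian category `C` are encoded as `Set C`.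
* "Sets" (index sets of families, coproducts, …) are encoded as types in the universe `v`
  of the morphisms of `C`.
* `Ext¹(X,Y) = 0` is encoded via the splitting of all short exact sequences
  `0 → Y → E → X → 0` (equivalently, the vanishing of the Yoneda Ext group).
* Relative (`…In B`) notions encode the corresponding notion computed inside the
  full (abelian exact) subcategory determined by `B : Set C`; the ambient case is
  `B = Set.univ`.
* Coproducts are not assumed to exist: a coproduct of a family existing in the
  (sub)category is encoded by a cocone with the universal property (`IsCoproductIn`).
-/

open CategoryTheory CategoryTheory.Limits

universe w v u

attribute [local instance] CategoryTheory.Abelian.hasFiniteBiproducts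

namespace Paper

variable {C : Type u} [Category.{v} C] [Abelian C]

/-- `(i, p)` is a short exact sequence `0 ⟶ A ⟶ E ⟶ B ⟶ 0` in `C`. -/
def IsShortExact {A E B : C} (i : A ⟶ E) (p : E ⟶ B) : Prop :=
  ∃ hw : i ≫ p = 0, (ShortComplex.mk i p hw).ShortExact

/-- `Q`, together with the injections `ι`, is the coproduct of the family `f`
inside the full subcategory determined by `B`. -/
structure IsCoproductIn (B : Set C) {I : Type v} (f : I → C) (Q : C)
    (ι : ∀ i, f i ⟶ Q) : Prop where
  mem : ∀ i, f i ∈ B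
  memQ : Q ∈ B
  desc : ∀ Z ∈ B, ∀ g : (∀ i, f i ⟶ Z), ∃! h : Q ⟶ Z, ∀ i, ι i ≫ h = g i

/-- `Ext¹(X, Y) = 0`, computed in the full subcategory determined by `B`:
every short exact sequence `0 → Y → E → X → 0` with `E ∈ B` splits. -/
def Ext1ZeroIn (B : Set C) (X Y : C) : Prop :=
  ∀ E ∈ B, ∀ (i : Y ⟶ E) (p : E ⟶ X), IsShortExact i p → ∃ r : E ⟶ Y, i ≫ r = 𝟙 Y

/-- `Ext¹(X, Y) = 0` in the ambient abelian category. -/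
def Ext1Zero (X Y : C) : Prop := Ext1ZeroIn Set.univ X Y

/-- `V^{⊥₁}`, computed in (the full subcategory determined by) `B`. -/
def rightPerp (B : Set C) (V : C) : Set C := {A ∈ B | Ext1ZeroIn B V A}

/-- `^{⊥₁}T`, computed in `B`. -/
def leftPerpSet (B T : Set C) : Set C := {A ∈ B | ∀ X ∈ T, Ext1ZeroIn B A X}

/-- `T^{⊥₁}`, computed in `B`. -/
def rightPerpSet (B T : Set C) : Set C := {A ∈ B | ∀ X ∈ T, Ext1ZeroIn B X A}

/-- `Sub(X)` relative to `B`: objects of `B` admitting a monomorphism into an object of `X`. -/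
def subIn (B X : Set C) : Set C := {A ∈ B | ∃ T ∈ X, ∃ f : A ⟶ T, Mono f}

/-- `Quot(X)` relative to `B`: objects of `B` which are epimorphic images of objects of `X`. -/
def quotIn (B X : Set C) : Set C := {A ∈ B | ∃ T ∈ X, ∃ f : T ⟶ A, Epi f}

/-- `(T, F)` is a torsion pair in (the full subcategory determined by) `B`. -/
structure IsTorsionPairIn (B T F : Set C) : Prop where
  eqF : F = {A ∈ B | ∀ X ∈ T, ∀ f : X ⟶ A, f = 0}
  eqT : T = {A ∈ B | ∀ Y ∈ F, ∀ f : A ⟶ Y, f = 0}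
  seq : ∀ A ∈ B, ∃ (X Y : C) (i : X ⟶ A) (p : A ⟶ Y), X ∈ T ∧ Y ∈ F ∧ IsShortExact i p

/-- `T` is a torsion class in `B`. -/
def IsTorsionClassIn (B T : Set C) : Prop := ∃ F, IsTorsionPairIn B T F

/-- `F` is a torsion-free class in `B`. -/
def IsTorsionFreeClassIn (B F : Set C) : Prop := ∃ T, IsTorsionPairIn B T F

/-- `φ : M ⟶ X` is a `T`-preenvelope. -/
structure IsPreenvelope (T : Set C) {M X : C} (φ : M ⟶ X) : Prop where
  mem : X ∈ T
  fac : ∀ T' ∈ T, ∀ g : M ⟶ T', ∃ h : X ⟶ T', φ ≫ h = g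

/-- `φ` is a semi-special `T`-preenvelope (relative to `B`):
a `T`-preenvelope whose cokernel lies in `^{⊥₁}T` (computed in `B`). -/
def IsSemiSpecialPreenvelopeIn (B T : Set C) {M X : C} (φ : M ⟶ X) : Prop :=
  IsPreenvelope T φ ∧ cokernel φ ∈ leftPerpSet B T

/-- `φ` is a special `T`-preenvelope (relative to `B`). -/
def IsSpecialPreenvelopeIn (B T : Set C) {M X : C} (φ : M ⟶ X) : Prop :=
  Mono φ ∧ IsSemiSpecialPreenvelopeIn B T φ

/-- `T` is preenveloping in `B`. -/
def PreenvelopingIn (B T : Set C) : Prop :=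
  ∀ M ∈ B, ∃ (X : C) (φ : M ⟶ X), IsPreenvelope T φ

/-- `T` is semi-special preenveloping in `B`. -/
def SemiSpecialPreenvelopingIn (B T : Set C) : Prop :=
  ∀ M ∈ B, ∃ (X : C) (φ : M ⟶ X), IsSemiSpecialPreenvelopeIn B T φ

/-- `T` is special preenveloping in `B`. -/
def SpecialPreenvelopingIn (B T : Set C) : Prop :=
  ∀ M ∈ B, ∃ (X : C) (φ : M ⟶ X), IsSpecialPreenvelopeIn B T φ

/-- `φ : X ⟶ M` is a `T`-precover. -/
structure IsPrecover (T : Set C) {X M : C} (φ : X ⟶ M) : Prop where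
  mem : X ∈ T
  fac : ∀ T' ∈ T, ∀ g : T' ⟶ M, ∃ h : T' ⟶ X, h ≫ φ = g

/-- `φ` is a semi-special `T`-precover (relative to `B`):
a `T`-precover whose kernel lies in `T^{⊥₁}` (computed in `B`). -/
def IsSemiSpecialPrecoverIn (B T : Set C) {X M : C} (φ : X ⟶ M) : Prop :=
  IsPrecover T φ ∧ kernel φ ∈ rightPerpSet B T

/-- `T` is precovering in `B`. -/
def PrecoveringIn (B T : Set C) : Prop :=
  ∀ M ∈ B, ∃ (X : C) (φ : X ⟶ M), IsPrecover T φ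

/-- `T` is semi-special precovering in `B`. -/
def SemiSpecialPrecoveringIn (B T : Set C) : Prop :=
  ∀ M ∈ B, ∃ (X : C) (φ : X ⟶ M), IsSemiSpecialPrecoverIn B T φ

/-- `Add(V)` relative to `B`: direct summands of coproducts (existing in `B`)
of copies of `V`. -/
def addIn (B : Set C) (V : C) : Set C :=
  {A ∈ B | ∃ (I : Type v) (Q : C) (ι : ∀ _ : I, V ⟶ Q),
     IsCoproductIn B (fun _ : I => V) Q ι ∧ ∃ (s : A ⟶ Q) (r : Q ⟶ A), s ≫ r = 𝟙 A}

/-- `Gen(V)` relative to `B`: quotients of objects of `Add(V)`. -/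
def genIn (B : Set C) (V : C) : Set C :=
  {A ∈ B | ∃ X ∈ addIn B V, ∃ p : X ⟶ A, Epi p}

/-- `Pres(V)` relative to `B`: cokernels of morphisms between objects of `Add(V)`. -/
def presIn (B : Set C) (V : C) : Set C :=
  {A ∈ B | ∃ X ∈ addIn B V, ∃ Y ∈ addIn B V,
     ∃ (f : X ⟶ Y) (c : Y ⟶ A) (hw : f ≫ c = 0), Epi c ∧ (ShortComplex.mk f c hw).Exact}

/-- `Ḡen(V) = Sub(Gen(V))` relative to `B`. -/
def barGenIn (B : Set C) (V : C) : Set C := subIn B (genIn B V)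

/-- The class `X` is cogenerating in `B`. -/
def CogeneratingIn (B X : Set C) : Prop := ∀ A ∈ B, ∃ T ∈ X, ∃ f : A ⟶ T, Mono f

/-- The class `X` is generating in `B`. -/
def GeneratingIn (B X : Set C) : Prop := ∀ A ∈ B, ∃ T ∈ X, ∃ f : T ⟶ A, Epi f

/-- `V` is a quasi-tilting object of (the full subcategory determined by) `B`:
`Gen(V)` is a torsion class and `Gen(V) = Pres(V) = Ḡen(V) ∩ V^{⊥₁}`. -/
def IsQuasiTiltingIn (B : Set C) (V : C) : Prop :=
  V ∈ B ∧ IsTorsionClassIn B (genIn B V) ∧ genIn B V = presIn B V ∧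
    genIn B V = barGenIn B V ∩ rightPerp B V

/-- `V` is a tilting object of `B`: quasi-tilting with `Gen(V)` cogenerating. -/
def IsTiltingIn (B : Set C) (V : C) : Prop :=
  IsQuasiTiltingIn B V ∧ CogeneratingIn B (genIn B V)

/-- `G` is an epi-generator of `B`: every object of `B` is an epimorphic image of a
coproduct (existing in `B`) of copies of `G`. -/
def IsEpiGeneratorIn (B : Set C) (G : C) : Prop :=
  G ∈ B ∧ ∀ A ∈ B, ∃ (I : Type v) (Q : C) (ι : ∀ _ : I, G ⟶ Q),
    IsCoproductIn B (fun _ : I => G) Q ι ∧ ∃ p : Q ⟶ A, Epi p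

/-- `0 → A —u→ X → V^{(J)} → 0` is a universal extension of `V` by `A` (relative to `B`):
the right end of the sequence is a nonempty coproduct of copies of `V` existing in `B`,
and the induced map `Ext¹(V,A) → Ext¹(V,X)` is zero (encoded: for every extension
`0 → A —i→ E → V → 0` with `E ∈ B`, its pushout along `u` splits, i.e. `u` extends
along `i`). -/
def IsUniversalExtensionIn (B : Set C) (V A X : C) (u : A ⟶ X) : Prop :=
  A ∈ B ∧ X ∈ B ∧
  (∃ (J : Type v) (_ : Nonempty J) (P : C) (κ : ∀ _ : J, V ⟶ P) (p : X ⟶ P),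
     IsCoproductIn B (fun _ : J => V) P κ ∧ IsShortExact u p) ∧
  (∀ E ∈ B, ∀ (i : A ⟶ E) (q : E ⟶ V), IsShortExact i q → ∃ ψ : E ⟶ X, i ≫ ψ = u)

/-- `V` is `Ext¹`-universal in `B`: universal extensions of `V` by every object exist. -/
def IsExt1UniversalIn (B : Set C) (V : C) : Prop :=
  ∀ A ∈ B, ∃ (X : C) (u : A ⟶ X), IsUniversalExtensionIn B V A X u

/-- `(X, Y)` is a cotorsion pair in (the full subcategory determined by) `B`. -/
def IsCotorsionPairIn (B X Y : Set C) : Prop :=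
  Y = {A ∈ B | ∀ Z ∈ X, Ext1ZeroIn B Z A} ∧
  X = {A ∈ B | ∀ Z ∈ Y, Ext1ZeroIn B A Z}

/-- The pair `(X, Y)` is right complete in `B`: every `A ∈ B` admits a short exact
sequence `0 → A → Y' → X' → 0` with `Y' ∈ Y`, `X' ∈ X`. -/
def RightCompleteIn (B X Y : Set C) : Prop :=
  ∀ A ∈ B, ∃ (Y' X' : C) (i : A ⟶ Y') (p : Y' ⟶ X'), Y' ∈ Y ∧ X' ∈ X ∧ IsShortExact i p

/-- The pair `(X, Y)` is left complete in `B`: every `A ∈ B` admits a short exact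
sequence `0 → Y' → X' → A → 0` with `Y' ∈ Y`, `X' ∈ X`. -/
def LeftCompleteIn (B X Y : Set C) : Prop :=
  ∀ A ∈ B, ∃ (Y' X' : C) (i : Y' ⟶ X') (p : X' ⟶ A), Y' ∈ Y ∧ X' ∈ X ∧ IsShortExact i p

/-- The full subcategory determined by `B` is reflective in `C`:
the (fully faithful) inclusion functor has a left adjoint. -/
def IsReflectiveSub (B : Set C) : Prop :=
  (ObjectProperty.ι (· ∈ B)).IsRightAdjoint

/-- The full subcategory determined by `B` is coreflective in `C`:
the inclusion functor has a right adjoint. -/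
def IsCoreflectiveSub (B : Set C) : Prop :=
  (ObjectProperty.ι (· ∈ B)).IsLeftAdjoint

/-- `Ext²(V, A) = 0` (Yoneda `Ext²`): every `2`-fold extension
`0 → A —g→ X₁ —f→ X₀ —p→ V → 0` represents the trivial class, i.e. (by the standard
long-exact-sequence criterion) the extension `0 → A → X₁ → im f → 0` extends to an
extension of `X₀` by `A`. -/
def Ext2Zero (V A : C) : Prop :=
  ∀ (X1 X0 : C) (g : A ⟶ X1) (f : X1 ⟶ X0) (p : X0 ⟶ V)
    (w1 : g ≫ f = 0) (w2 : f ≫ p = 0),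
    Mono g → Epi p → (ShortComplex.mk g f w1).Exact → (ShortComplex.mk f p w2).Exact →
    ∃ (Y : C) (a : A ⟶ Y) (b : Y ⟶ X0), IsShortExact a b ∧
      ∃ φ : X1 ⟶ Y, g ≫ φ = a ∧ φ ≫ b = f

/-- `V` has projective dimension at most `1`: `Ext²(V, A) = 0` for every `A`. -/
def ProjDimLE1 (V : C) : Prop := ∀ A : C, Ext2Zero V A

/-- The "elements" of the (possibly large) Yoneda `Ext¹(X, Y)`: short exact sequences
`0 → Y → E → X → 0`. -/
def ExtElem (X Y : C) : Type (max u v) :=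
  Σ' (E : C) (i : Y ⟶ E) (p : E ⟶ X), IsShortExact i p

/-- Yoneda equivalence of extensions. -/
def extRel (X Y : C) : ExtElem X Y → ExtElem X Y → Prop :=
  fun e₁ e₂ => ∃ φ : e₁.1 ⟶ e₂.1, e₁.2.1 ≫ φ = e₂.2.1 ∧ φ ≫ e₂.2.2.1 = e₁.2.2.1

/-- The (possibly large) Yoneda `Ext¹(X, Y)`, as the quotient of the collection
of extensions by Yoneda equivalence. -/
def ExtClass (X Y : C) : Type (max u v) := Quot (extRel X Y)

/-- `Ext¹(A, B)` is a finitely generated (right) `End(A)`-module: there are `n : ℕ` and a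
short exact sequence `0 → B → X → A^n → 0` whose connecting map
`Hom(A, A^n) → Ext¹(A, B)` is surjective, i.e. every extension of `A` by `B` is a pullback
of the fixed one along some `h : A ⟶ A^n`. -/
def Ext1FGEnd (A B : C) : Prop :=
  ∃ (n : ℕ) (X : C) (u : B ⟶ X) (p : X ⟶ ⨁ (fun _ : Fin n => A)),
    IsShortExact u p ∧
    ∀ (E : C) (i : B ⟶ E) (q : E ⟶ A), IsShortExact i q →
      ∃ (h : A ⟶ ⨁ (fun _ : Fin n => A)) (φ : E ⟶ X), i ≫ φ = u ∧ φ ≫ p = q ≫ h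

/-- `∐¹_I f = 0`: for every `I`-indexed family of short exact sequences
`0 → Xᵢ → Yᵢ → fᵢ → 0`, the induced morphism `∐ Xᵢ → ∐ Yᵢ` between (existing)
coproducts is a monomorphism. -/
def CoprodDerivedZeroFam {I : Type v} (f : I → C) : Prop :=
  ∀ (X Y : I → C) (u : ∀ i, X i ⟶ Y i) (p : ∀ i, Y i ⟶ f i),
    (∀ i, IsShortExact (u i) (p i)) →
    ∀ (QX QY : C) (ιX : ∀ i, X i ⟶ QX) (ιY : ∀ i, Y i ⟶ QY) (uu : QX ⟶ QY),
      IsCoproductIn Set.univ X QX ιX → IsCoproductIn Set.univ Y QY ιY →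
      (∀ i, ιX i ≫ uu = u i ≫ ιY i) → Mono uu

/-- `∐¹_I V = 0` for the constant family at `V`. -/
def CoprodDerivedZero (I : Type v) (V : C) : Prop :=
  CoprodDerivedZeroFam (fun _ : I => V)

/-- Witness that the category `D` is `Hom`-finite: a commutative ring `R` together with an
`R`-linear structure on `D` for which all `Hom`-modules are finitely generated. -/
structure HomFiniteStruct (D : Type u) [Category.{v} D] [Preadditive D] :
    Type (max u (v + 1)) where
  R : Type v
  [commRing : CommRing R]
  [linear : CategoryTheory.Linear R D]
  homFinite : ∀ A B : D, Module.Finite R (A ⟶ B)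

/-- The category `D` is `Hom`-finite. -/
def HomFinite (D : Type u) [Category.{v} D] [Preadditive D] : Prop :=
  Nonempty (HomFiniteStruct D)

/-- `Q`, with injections `ι`, is a coproduct of the family `f` in an arbitrary category. -/
def IsCoproductCocone {D : Type u} [Category.{v} D] {I : Type w} (f : I → D) (Q : D)
    (ι : ∀ i, f i ⟶ Q) : Prop :=
  ∀ (Z : D) (g : ∀ i, f i ⟶ Z), ∃! h : Q ⟶ Z, ∀ i, ι i ≫ h = g i

/-- The category `D` satisfies (Ab.4): it has all (small) coproducts, and coproducts
of monomorphisms are monomorphisms (for abelian categories, the latter is equivalent to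
the exactness of coproducts). -/
def Ab4Type (D : Type u) [Category.{v} D] : Prop :=
  HasCoproducts.{v} D ∧
  ∀ (I : Type v) (X Y : I → D) (u : ∀ i, X i ⟶ Y i), (∀ i, Mono (u i)) →
    ∀ (QX QY : D) (ιX : ∀ i, X i ⟶ QX) (ιY : ∀ i, Y i ⟶ QY) (uu : QX ⟶ QY),
      IsCoproductCocone X QX ιX → IsCoproductCocone Y QY ιY →
      (∀ i, ιX i ≫ uu = u i ≫ ιY i) → Mono uu

/-- The category `D` satisfies (Ab.5): it has all (small) coproducts and directed
(filtered) colimits of monomorphisms are monomorphisms (for abelian categories the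
latter is equivalent to the exactness of directed colimits). -/
def Ab5Type (D : Type u) [Category.{v} D] : Prop :=
  HasCoproducts.{v} D ∧
  ∀ (J : Type v) [SmallCategory J] [IsFiltered J] (F G : J ⥤ D) (α : F ⟶ G),
    (∀ j, Mono (α.app j)) →
    ∀ (cF : Cocone F) (cG : Cocone G), IsColimit cF → IsColimit cG →
      ∀ m : cF.pt ⟶ cG.pt, (∀ j, cF.ι.app j ≫ m = α.app j ≫ cG.ι.app j) → Mono m

/-- A ring `S` is left coherent: every finitely generated left ideal is finitely
presented as a left `S`-module. -/
def LeftCoherentRing (S : Type u) [Ring S] : Prop :=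
  ∀ J : Submodule S S, J.FG → Module.FinitePresentation S J

/-- A ring `S` is right coherent: every finitely generated right ideal (i.e. finitely
generated left ideal of `Sᵐᵒᵖ`) is finitely presented as a right `S`-module. -/
def RightCoherentRing (S : Type u) [Ring S] : Prop :=
  ∀ J : Submodule Sᵐᵒᵖ Sᵐᵒᵖ, J.FG → Module.FinitePresentation Sᵐᵒᵖ J

end Paper

/-!
A torsion class is closed under quotients and extensions, so `ℬ = Sub(Gen V)` is closed under
subobjects, quotients and finite biproducts. Two observations show that `Gen`, `Pres` and
`Ḡen ∩ V^{⊥₁}` of `V` are the same whether computed in `ℬ` or in the ambient category: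
a coproduct of copies of `V` formed in `ℬ` lies in `Gen V`, because all coprojections
factor through the inclusion of its torsion part, which therefore has a section; and any
extension of `V` by an object of `ℬ` lies in `ℬ`, because its pushout into `Gen V` stays in
`Gen V`. Since `Ext¹(V, Gen V) = 0`,
objects of `Add V` lie in `^{⊥₁}(Gen V)`; conversely an object `A ∈ Gen V = Pres V` has a
presentation `0 → K → Y → A → 0` with `Y ∈ Add V` and `K ∈ Gen V`, which splits when
`A ∈ ^{⊥₁}(Gen V)`. As `Gen V` is determined by `Add V`, this gives (3).
-/

namespace Paper

section Category

variable {C : Type u} [Category.{v} C]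

namespace IsCoproductIn

variable {B : Set C} {I : Type v} {f : I → C} {Q : C} {ι : ∀ i, f i ⟶ Q}

lemma hom_ext (hQ : IsCoproductIn B f Q ι) {Z : C} (hZ : Z ∈ B) {g h : Q ⟶ Z}
    (H : ∀ i, ι i ≫ g = ι i ≫ h) : g = h := by
  obtain ⟨_, -, huniq⟩ := hQ.desc Z hZ (fun i => ι i ≫ h)
  exact (huniq g H).trans (huniq h fun _ => rfl).symm

lemma exists_section_of_factors (hQ : IsCoproductIn B f Q ι) {S : C} (hS : S ∈ B)
    (m : S ⟶ Q) (hm : ∀ i, ∃ l : f i ⟶ S, l ≫ m = ι i) : ∃ s : Q ⟶ S, s ≫ m = 𝟙 Q := by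
  choose l hl using hm
  obtain ⟨s, hs, -⟩ := hQ.desc S hS l
  exact ⟨s, hQ.hom_ext hQ.memQ fun i => by rw [reassoc_of% (hs i), hl, Category.comp_id]⟩

lemma of_subset (hQ : IsCoproductIn B f Q ι) {B' : Set C} (hB : B' ⊆ B) (hf : ∀ i, f i ∈ B')
    (hQB : Q ∈ B') : IsCoproductIn B' f Q ι :=
  ⟨hf, hQB, fun Z hZ => hQ.desc Z (hB hZ)⟩

end IsCoproductIn

lemma isCoproductIn_punit {B : Set C} {V : C} (hV : V ∈ B) :
    IsCoproductIn B (fun _ : PUnit.{v+1} => V) V (fun _ => 𝟙 V) :=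
  ⟨fun _ => hV, hV, fun _ _ g => ⟨g PUnit.unit, fun _ => Category.id_comp _,
    fun _ h => by rw [← h PUnit.unit, Category.id_comp]⟩⟩

variable {B : Set C} {V : C}

lemma mem_addIn_of_isCoproductIn {I : Type v} {Q : C} {ι : I → (V ⟶ Q)}
    (hQ : IsCoproductIn B (fun _ : I => V) Q ι) : Q ∈ addIn B V :=
  ⟨hQ.memQ, I, Q, ι, hQ, 𝟙 Q, 𝟙 Q, Category.id_comp _⟩

lemma self_mem_addIn (hV : V ∈ B) : V ∈ addIn B V :=
  mem_addIn_of_isCoproductIn (isCoproductIn_punit hV)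

lemma mem_addIn_of_retraction {A A' : C} (hA : A ∈ B) (hA' : A' ∈ addIn B V) {s : A ⟶ A'}
    {r : A' ⟶ A} (hsr : s ≫ r = 𝟙 A) : A ∈ addIn B V := by
  obtain ⟨-, I, Q, ι, hQ, s', r', hsr'⟩ := hA'
  exact ⟨hA, I, Q, ι, hQ, s ≫ s', r' ≫ r, by simp [reassoc_of% hsr', hsr]⟩

lemma addIn_univ_subset_addIn (hB : addIn Set.univ V ⊆ B) : addIn Set.univ V ⊆ addIn B V := by
  intro A hA
  refine ⟨hB hA, ?_⟩
  obtain ⟨-, I, Q, ι, hQ, s, r, hsr⟩ := hA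
  refine ⟨I, Q, ι, hQ.of_subset (Set.subset_univ B) ?_ ?_, s, r, hsr⟩
  · exact fun _ => hB (self_mem_addIn trivial)
  · exact hB (mem_addIn_of_isCoproductIn hQ)

lemma addIn_subset_genIn : addIn B V ⊆ genIn B V :=
  fun A hA => ⟨hA.1, A, hA, 𝟙 A, inferInstance⟩

lemma genIn_subset_barGenIn : genIn B V ⊆ barGenIn B V :=
  fun A hA => ⟨hA.1, A, hA, 𝟙 A, inferInstance⟩

lemma genIn_eq_of_addIn_eq {V' : C} (h : addIn B V = addIn B V') : genIn B V = genIn B V' := by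
  simp only [genIn, h]

instance (V : C) : ObjectProperty.IsClosedUnderQuotients (genIn (Set.univ : Set C) V) where
  prop_of_epi e _ := fun ⟨_, X, hX, q, _⟩ => ⟨trivial, X, hX, q ≫ e, epi_comp _ _⟩

lemma mem_subIn_of_mem {X : Set C} {A : C} (hA : A ∈ X) : A ∈ subIn Set.univ X :=
  ⟨trivial, A, hA, 𝟙 A, inferInstance⟩

instance (X : Set C) : ObjectProperty.IsClosedUnderSubobjects (subIn (Set.univ : Set C) X) where
  prop_of_mono m _ := fun ⟨_, T, hT, n, _⟩ => ⟨trivial, T, hT, m ≫ n, mono_comp _ _⟩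

end Category

variable {C : Type u} [Category.{v} C] [Abelian C]

namespace IsShortExact

lemma of_exact {X E A : C} {i : X ⟶ E} {p : E ⟶ A} (hw : i ≫ p = 0) [Mono i] [Epi p]
    (hex : (ShortComplex.mk i p hw).Exact) : IsShortExact i p :=
  ⟨hw, .mk' hex ‹_› ‹_›⟩

lemma kernel_ι {E A : C} (p : E ⟶ A) [Epi p] : IsShortExact (kernel.ι p) p :=
  of_exact (kernel.condition p)
    ((ShortComplex.mk _ _ (kernel.condition p)).exact_of_f_is_kernel (kernelIsKernel p))

variable {X E A : C} {i : X ⟶ E} {p : E ⟶ A}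

lemma exists_retraction_of_section (h : IsShortExact i p) {s : A ⟶ E} (hs : s ≫ p = 𝟙 A) :
    ∃ r : E ⟶ X, i ≫ r = 𝟙 X :=
  let ⟨_, hS⟩ := h
  ⟨_, (ShortComplex.Splitting.ofExactOfSection _ hS.exact s hs hS.mono_f).f_r⟩

lemma exists_section_of_retraction (h : IsShortExact i p) {r : E ⟶ X} (hr : i ≫ r = 𝟙 X) :
    ∃ s : A ⟶ E, s ≫ p = 𝟙 A :=
  let ⟨_, hS⟩ := h
  ⟨_, (ShortComplex.Splitting.ofExactOfRetraction _ hS.exact r hr hS.epi_g).s_g⟩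

lemma pullback_fst (h : IsShortExact i p) {B : C} (g : B ⟶ A) :
    ∃ k : X ⟶ pullback g p, IsShortExact k (pullback.fst g p) := by
  obtain ⟨hw, hS⟩ := h
  have := hS.mono_f
  have := hS.epi_g
  let k : X ⟶ pullback g p := pullback.lift 0 i (zero_comp.trans hw.symm)
  have hk_snd : k ≫ pullback.snd g p = i := pullback.lift_snd _ _ _
  have hk_fst : k ≫ pullback.fst g p = 0 := pullback.lift_fst _ _ _
  have : Mono k := mono_of_mono_fac hk_snd
  refine ⟨k, of_exact hk_fst (ShortComplex.exact_of_f_is_kernel _ ?_)⟩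
  refine KernelFork.IsLimit.ofι' k hk_fst fun {W} t ht => ?_
  have ht' : (t ≫ pullback.snd g p) ≫ p = 0 := by
    rw [Category.assoc, ← pullback.condition, reassoc_of% ht, zero_comp]
  refine ⟨hS.exact.lift _ ht', pullback.hom_ext ?_ ?_⟩
  · rw [Category.assoc, hk_fst, comp_zero, ht]
  · rw [Category.assoc, hk_snd]
    exact hS.exact.lift_f _ ht'

lemma pushout_inl (h : IsShortExact i p) {B : C} (g : X ⟶ B) :
    ∃ d : pushout g i ⟶ A, IsShortExact (pushout.inl g i) d := by
  obtain ⟨hw, hS⟩ := h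
  have := hS.mono_f
  have := hS.epi_g
  let d : pushout g i ⟶ A := pushout.desc 0 p (comp_zero.trans hw.symm)
  have hinr_d : pushout.inr g i ≫ d = p := pushout.inr_desc _ _ _
  have hinl_d : pushout.inl g i ≫ d = 0 := pushout.inl_desc _ _ _
  have : Epi d := epi_of_epi_fac hinr_d
  refine ⟨d, of_exact hinl_d (ShortComplex.exact_of_g_is_cokernel _ ?_)⟩
  refine CokernelCofork.IsColimit.ofπ' d hinl_d fun {W} t ht => ?_
  have ht' : i ≫ pushout.inr g i ≫ t = 0 := by
    rw [← Category.assoc, ← pushout.condition, Category.assoc, ht, comp_zero]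
  refine ⟨hS.exact.desc _ ht', pushout.hom_ext ?_ ?_⟩
  · rw [reassoc_of% hinl_d, zero_comp, ht]
  · rw [reassoc_of% hinr_d]
    exact hS.exact.g_desc _ ht'

lemma exists_lift (h : IsShortExact i p) {B : C} (g : B ⟶ A)
    (hB : Ext1ZeroIn Set.univ B X) : ∃ ℓ : B ⟶ E, ℓ ≫ p = g := by
  obtain ⟨k, hk⟩ := h.pullback_fst g
  obtain ⟨r, hr⟩ := hB _ trivial _ _ hk
  obtain ⟨s, hs⟩ := hk.exists_section_of_retraction hr
  exact ⟨s ≫ pullback.snd g p, by rw [Category.assoc, ← pullback.condition, reassoc_of% hs]⟩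

end IsShortExact

lemma Ext1ZeroIn.anti {B B' : Set C} (hB : B' ⊆ B) {X Y : C} (h : Ext1ZeroIn B X Y) :
    Ext1ZeroIn B' X Y :=
  fun E hE => h E (hB hE)

lemma ext1ZeroIn_of_retraction {A Q X : C} {s : A ⟶ Q} {r : Q ⟶ A} (hsr : s ≫ r = 𝟙 A)
    (hQ : Ext1ZeroIn Set.univ Q X) : Ext1ZeroIn Set.univ A X := by
  intro E _ u p h
  obtain ⟨ℓ, hℓ⟩ := h.exists_lift r hQ
  exact h.exists_retraction_of_section (s := s ≫ ℓ) (by rw [Category.assoc, hℓ, hsr])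

lemma IsCoproductIn.ext1ZeroIn {I : Type v} {f : I → C} {Q : C} {ι : ∀ i, f i ⟶ Q}
    (hQ : IsCoproductIn Set.univ f Q ι) {X : C} (hX : ∀ i, Ext1ZeroIn Set.univ (f i) X) :
    Ext1ZeroIn Set.univ Q X := by
  intro E _ u p h
  obtain ⟨s, hs⟩ := hQ.exists_section_of_factors trivial p fun j => h.exists_lift (ι j) (hX j)
  exact h.exists_retraction_of_section hs

section SubGen

variable {B X : Set C} {V : C}

lemma presIn_subset_genIn : presIn B V ⊆ genIn B V :=
  fun _ ⟨hA, _, _, Y, hY, _, c, _, hc, _⟩ => ⟨hA, Y, hY, c, hc⟩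

lemma presIn_univ_inter_subset_presIn (hB : addIn Set.univ V ⊆ B) :
    presIn Set.univ V ∩ B ⊆ presIn B V :=
  fun _ ⟨⟨_, X, hX, Y, hY, f, c, hw, hc, hex⟩, hA⟩ =>
    ⟨hA, X, addIn_univ_subset_addIn hB hX, Y, addIn_univ_subset_addIn hB hY, f, c, hw, hc, hex⟩

instance [ObjectProperty.IsClosedUnderQuotients X] :
    ObjectProperty.IsClosedUnderQuotients (subIn Set.univ X) where
  prop_of_epi e _ := fun ⟨_, _, hT, n, _⟩ =>
    ⟨trivial, pushout e n, ObjectProperty.prop_of_epi X (pushout.inr e n) hT, pushout.inl e n,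
      inferInstance⟩

lemma isZero_mem_subIn {A Z : C} (hA : A ∈ X) (hZ : IsZero Z) : Z ∈ subIn Set.univ X :=
  ⟨trivial, A, hA, hZ.to_ A, mono_of_source_iso_zero _ hZ.isoZero⟩

variable [ObjectProperty.IsClosedUnderExtensions X]

lemma biprod_mem_subIn {A A' : C} (hA : A ∈ subIn Set.univ X) (hA' : A' ∈ subIn Set.univ X) :
    (A ⊞ A') ∈ subIn Set.univ X :=
  let ⟨_, T, hT, n, _⟩ := hA
  let ⟨_, T', hT', n', _⟩ := hA'
  ⟨trivial, T ⊞ T', ObjectProperty.prop_biprod X hT hT', biprod.map n n', inferInstance⟩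

lemma IsShortExact.mem_subIn {A E Y : C} {i : A ⟶ E} {p : E ⟶ Y} (h : IsShortExact i p)
    (hA : A ∈ subIn Set.univ X) (hY : Y ∈ X) : E ∈ subIn Set.univ X := by
  obtain ⟨-, T, hT, n, _⟩ := hA
  obtain ⟨d, _, hd⟩ := h.pushout_inl n
  exact ⟨trivial, pushout n i, ObjectProperty.prop_X₂_of_shortExact X hd hT hY, pushout.inr n i,
    inferInstance⟩

end SubGen

namespace IsTorsionPairIn

variable {T F : Set C} (hTP : IsTorsionPairIn Set.univ T F)
include hTP

lemma hom_eq_zero {X Y : C} (hX : X ∈ T) (hY : Y ∈ F) (f : X ⟶ Y) : f = 0 := by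
  rw [hTP.eqT] at hX
  exact hX.2 Y hY f

lemma mem_torsion_of_forall_hom_eq_zero {A : C} (h : ∀ Y ∈ F, ∀ f : A ⟶ Y, f = 0) : A ∈ T := by
  rw [hTP.eqT]
  exact ⟨trivial, h⟩

lemma mem_torsionFree_of_forall_hom_eq_zero {A : C} (h : ∀ X ∈ T, ∀ f : X ⟶ A, f = 0) :
    A ∈ F := by
  rw [hTP.eqF]
  exact ⟨trivial, h⟩

lemma isClosedUnderQuotients : ObjectProperty.IsClosedUnderQuotients T where
  prop_of_epi e _ hA := hTP.mem_torsion_of_forall_hom_eq_zero fun Y hY f => by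
    rw [← cancel_epi e, comp_zero]
    exact hTP.hom_eq_zero hA hY _

lemma isClosedUnderExtensions : ObjectProperty.IsClosedUnderExtensions T where
  prop_X₂_of_shortExact hS h₁ h₃ := hTP.mem_torsion_of_forall_hom_eq_zero fun Y hY f => by
    have := hS.epi_g
    obtain ⟨g, hg⟩ := hS.exact.desc' f (hTP.hom_eq_zero h₁ hY _)
    rw [← hg, hTP.hom_eq_zero h₃ hY g, comp_zero]

lemma isClosedUnderSubobjects_torsionFree : ObjectProperty.IsClosedUnderSubobjects F where
  prop_of_mono m _ hY := hTP.mem_torsionFree_of_forall_hom_eq_zero fun _ hX _ =>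
    zero_of_comp_mono m (hTP.hom_eq_zero hX hY _)

lemma restrict {B : Set C} [ObjectProperty.IsClosedUnderQuotients B] (hTB : T ⊆ B) :
    IsTorsionPairIn B T (F ∩ B) where
  eqF := by
    ext Y
    exact ⟨fun ⟨hYF, hYB⟩ => ⟨hYB, fun X hX f => hTP.hom_eq_zero hX hYF f⟩,
      fun ⟨hYB, h⟩ => ⟨hTP.mem_torsionFree_of_forall_hom_eq_zero h, hYB⟩⟩
  eqT := by
    ext A
    refine ⟨fun hA => ⟨hTB hA, fun Y hY f => hTP.hom_eq_zero hA hY.1 f⟩, fun ⟨hAB, h⟩ => ?_⟩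
    refine hTP.mem_torsion_of_forall_hom_eq_zero fun Y hY f => ?_
    have := hTP.isClosedUnderSubobjects_torsionFree
    have him : Abelian.image f ∈ F ∩ B :=
      ⟨ObjectProperty.prop_of_mono F (Abelian.image.ι f) hY,
        ObjectProperty.prop_of_epi B (Abelian.factorThruImage f) hAB⟩
    rw [← Abelian.image.fac f, h _ him (Abelian.factorThruImage f), zero_comp]
  seq A hA := by
    obtain ⟨X, Y, i, p, hX, hY, h⟩ := hTP.seq A trivial
    have := h.2.epi_g
    exact ⟨X, Y, i, p, hX, ⟨hY, ObjectProperty.prop_of_epi B p hA⟩, h⟩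

lemma mem_of_isCoproductIn {B : Set C} (hTB : T ⊆ B) {I : Type v} {f : I → C} {Q : C}
    {ι : ∀ i, f i ⟶ Q} (hQ : IsCoproductIn B f Q ι) (hf : ∀ i, f i ∈ T) : Q ∈ T := by
  obtain ⟨tQ, FQ, m, _, htQ, hFQ, _, hS⟩ := hTP.seq Q trivial
  have := hS.mono_f
  obtain ⟨s, hs⟩ := hQ.exists_section_of_factors (hTB htQ) m fun i =>
    hS.exact.lift' (ι i) (hTP.hom_eq_zero (hf i) hFQ _)
  have : Epi m := epi_of_epi_fac hs
  have := hTP.isClosedUnderQuotients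
  exact ObjectProperty.prop_of_epi T m htQ

end IsTorsionPairIn

variable {V : C}

lemma IsTorsionPairIn.addIn_subset_genIn_univ {B F : Set C}
    (hTP : IsTorsionPairIn Set.univ (genIn Set.univ V) F) (hB : genIn Set.univ V ⊆ B) :
    addIn B V ⊆ genIn Set.univ V := by
  rintro A ⟨-, I, Q, ι, hQ, s, r, hsr⟩
  have hQ : Q ∈ genIn Set.univ V :=
    hTP.mem_of_isCoproductIn hB hQ fun _ => addIn_subset_genIn (self_mem_addIn trivial)
  have : Epi r := epi_of_epi_fac hsr
  exact ObjectProperty.prop_of_epi (genIn Set.univ V) r hQ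

lemma IsTorsionPairIn.genIn_eq_genIn_univ {B F : Set C}
    (hTP : IsTorsionPairIn Set.univ (genIn Set.univ V) F) (hB : genIn Set.univ V ⊆ B) :
    genIn B V = genIn Set.univ V := by
  refine Set.Subset.antisymm (fun A ⟨_, X, hX, q, _⟩ => ?_) fun A hA => ⟨hB hA, ?_⟩
  · exact ObjectProperty.prop_of_epi (genIn Set.univ V) q (hTP.addIn_subset_genIn_univ hB hX)
  · obtain ⟨-, X, hX, q, hq⟩ := hA
    exact ⟨X, addIn_univ_subset_addIn (hB.trans' addIn_subset_genIn) hX, q, hq⟩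

namespace IsQuasiTiltingIn

lemma ext1ZeroIn_of_mem_genIn {B : Set C} (hV : IsQuasiTiltingIn B V) {X : C}
    (hX : X ∈ genIn B V) : Ext1ZeroIn B V X := by
  rw [hV.2.2.2] at hX
  exact hX.2.2

lemma addIn_eq (hV : IsQuasiTiltingIn Set.univ V) :
    addIn Set.univ V = leftPerpSet Set.univ (genIn Set.univ V) ∩ genIn Set.univ V := by
  refine Set.Subset.antisymm (fun A hA => ⟨⟨trivial, fun X hX => ?_⟩, addIn_subset_genIn hA⟩) ?_
  · obtain ⟨-, I, Q, ι, hQ, s, r, hsr⟩ := hA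
    exact ext1ZeroIn_of_retraction hsr (hQ.ext1ZeroIn fun _ => hV.ext1ZeroIn_of_mem_genIn hX)
  · rintro A ⟨⟨-, hA⟩, hAgen⟩
    rw [hV.2.2.1] at hAgen
    obtain ⟨-, X, hX, Y, hY, f, c, hw, hc, hex⟩ := hAgen
    -- the kernel of a presentation `X → Y → A → 0` is a quotient of `X`, so the presentation splits
    have hK : kernel c ∈ genIn Set.univ V :=
      ⟨trivial, X, hX, _, (ShortComplex.mk f c hw).exact_iff_epi_kernel_lift.1 hex⟩
    obtain ⟨r, hr⟩ := hA _ hK Y trivial _ _ (IsShortExact.kernel_ι c)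
    obtain ⟨s, hs⟩ := (IsShortExact.kernel_ι c).exists_section_of_retraction hr
    exact mem_addIn_of_retraction trivial hY hs

lemma isTiltingIn_subIn_genIn (hV : IsQuasiTiltingIn Set.univ V) :
    IsTiltingIn (subIn Set.univ (genIn Set.univ V)) V := by
  obtain ⟨-, ⟨F, hTP⟩, hpres, hbar⟩ := id hV
  set B := subIn Set.univ (genIn Set.univ V)
  have := hTP.isClosedUnderExtensions
  have hTB : genIn Set.univ V ⊆ B := fun _ => mem_subIn_of_mem
  have hAddB : addIn Set.univ V ⊆ B := hTB.trans' addIn_subset_genIn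
  have hgen : genIn B V = genIn Set.univ V := hTP.genIn_eq_genIn_univ hTB
  have hVT : V ∈ genIn Set.univ V := addIn_subset_genIn (self_mem_addIn trivial)
  refine ⟨⟨hTB hVT, ⟨F ∩ B, hgen ▸ hTP.restrict hTB⟩, ?_, ?_⟩, ?_⟩
  · refine Set.Subset.antisymm (fun A hA => ?_) presIn_subset_genIn
    rw [hgen] at hA
    exact presIn_univ_inter_subset_presIn hAddB ⟨hpres ▸ hA, hTB hA⟩
  · refine Set.Subset.antisymm (fun A hA => ⟨genIn_subset_barGenIn hA, hA.1, ?_⟩) ?_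
    · exact (hV.ext1ZeroIn_of_mem_genIn (hgen ▸ hA)).anti (Set.subset_univ B)
    · rintro A ⟨⟨hAB, -⟩, -, hA⟩
      rw [hgen, hbar]
      exact ⟨hAB, trivial, fun E _ i p h => hA E (h.mem_subIn hAB hVT) i p h⟩
  · exact fun A ⟨_, T, hT, n, hn⟩ => ⟨T, hgen ▸ hT, n, hn⟩

end IsQuasiTiltingIn

end Paper

namespace Stmt7

open Paper CategoryTheory CategoryTheory.Limits

variable {C : Type u} [Category.{v} C] [Abelian C]

theorem statement7 (V : C) (hV : IsQuasiTiltingIn (Set.univ : Set C) V) :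
    -- (1) `ℬ := Sub(Gen V)` is an abelian exact subcategory (closed under finite
    -- coproducts, kernels and cokernels) and `V` is a tilting object of `ℬ`
    ((∀ Z : C, Limits.IsZero Z → Z ∈ subIn Set.univ (genIn Set.univ V)) ∧
     (∀ A A' : C, A ∈ subIn Set.univ (genIn Set.univ V) →
        A' ∈ subIn Set.univ (genIn Set.univ V) →
        (A ⊞ A') ∈ subIn Set.univ (genIn Set.univ V)) ∧
     (∀ ⦃A A' : C⦄ (f : A ⟶ A'), A ∈ subIn Set.univ (genIn Set.univ V) →
        A' ∈ subIn Set.univ (genIn Set.univ V) →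
        Limits.kernel f ∈ subIn Set.univ (genIn Set.univ V) ∧
        Limits.cokernel f ∈ subIn Set.univ (genIn Set.univ V)) ∧
     IsTiltingIn (subIn Set.univ (genIn Set.univ V)) V) ∧
    -- (2) `Add(V) = ^{⊥₁}𝒯 ∩ 𝒯`
    (addIn Set.univ V =
      leftPerpSet Set.univ (genIn Set.univ V) ∩ genIn Set.univ V) ∧
    -- (3) two quasi-tilting objects generate the same class iff they are equivalent
    (∀ V' : C, IsQuasiTiltingIn (Set.univ : Set C) V' →
      (genIn Set.univ V = genIn Set.univ V' ↔
        addIn Set.univ V = addIn Set.univ V')) := by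
  obtain ⟨F, hTP⟩ := hV.2.1
  have := hTP.isClosedUnderExtensions
  have hVT : V ∈ genIn Set.univ V := addIn_subset_genIn (self_mem_addIn trivial)
  refine ⟨⟨fun Z hZ => isZero_mem_subIn hVT hZ, fun A A' => biprod_mem_subIn,
    fun A A' f hA hA' => ⟨?_, ?_⟩, hV.isTiltingIn_subIn_genIn⟩,
    hV.addIn_eq, fun V' hV' => ⟨fun h => ?_, genIn_eq_of_addIn_eq⟩⟩
  · exact ObjectProperty.prop_of_mono (subIn Set.univ (genIn Set.univ V)) (kernel.ι f) hA
  · exact ObjectProperty.prop_of_epi (subIn Set.univ (genIn Set.univ V)) (cokernel.π f) hA'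
  · rw [hV.addIn_eq, hV'.addIn_eq, h]

end Stmt7
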